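/- Let θ ∈ (ℝ/ℤ)∖{0} be rational. Then every accumulation point (x,y) of S_θ in 𝕋 intersects or separates P_θ. -/

import Mathlib

open Set Filter

/-- The circle `ℝ/ℤ`. -/
abbrev 𝕊 := AddCircle (1 : ℝ)

/-- The torus `𝕋 = (ℝ/ℤ) × (ℝ/ℤ)`. -/
abbrev 𝕋 := 𝕊 × 𝕊

/-- The doubling map `τ(x) = 2x` on the circle. -/
noncomputable def dbl : 𝕊 → 𝕊 := fun x => x + x

/-- The doubling map `F(x, y) = (2x, 2y)` on the torus. -/
noncomputable def F : 𝕋 → 𝕋 := fun p => (p.1 + p.1, p.2 + p.2)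

/-- The open arc of `(ℝ/ℤ) ∖ {a, b}` containing `z`, i.e. the connected component of
the complement of `{a, b}` containing `z`. -/
def arcAt (a b z : 𝕊) : Set 𝕊 := connectedComponentIn ({a, b}ᶜ : Set 𝕊) z

/-- The good region `G(a,b)` of a leaf with distinct endpoints `a, b`: the set of pairs
`(x, y)` such that `x` and `y` both lie in the closure of one and the same of the two
open arcs of `(ℝ/ℤ) ∖ {a, b}`. -/
def goodPair (a b : 𝕊) : Set 𝕋 :=
  {p | ∃ z ∈ ({a, b}ᶜ : Set 𝕊),
        p.1 ∈ closure (arcAt a b z) ∧ p.2 ∈ closure (arcAt a b z)}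

/-- The good region `G(S)` of a set `S ⊆ 𝕋`: the intersection of the good regions of
all off-diagonal points of `S`. -/
def good (S : Set 𝕋) : Set 𝕋 :=
  {p | ∀ q ∈ S, q.1 ≠ q.2 → p ∈ goodPair q.1 q.2}

/-- `α ∈ ℝ/ℤ` is periodic under the doubling map. -/
noncomputable def IsPer (α : 𝕊) : Prop := ∃ n > 0, dbl^[n] α = α

/-- The pre-major leaves: `b 0` consists of the two orderings of the major leaf
`{θ/2, (θ+1)/2}`, and `b (i+1) = (F⁻¹(b i) ∩ G(b i)) ∪ b i`. -/
noncomputable def preSeq (θ : ℝ) : ℕ → Set 𝕋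
  | 0 => {(((θ / 2 : ℝ) : 𝕊), (((θ + 1) / 2 : ℝ) : 𝕊)),
          ((((θ + 1) / 2 : ℝ) : 𝕊), ((θ / 2 : ℝ) : 𝕊))}
  | i + 1 => (F ⁻¹' preSeq θ i ∩ good (preSeq θ i)) ∪ preSeq θ i

/-- The set `Pre_θ` of pre-major leaves. -/
noncomputable def Pre (θ : ℝ) : Set 𝕋 := ⋃ i, preSeq θ i

/-- `L_θ`: the set of accumulation points of `Pre_θ` lying off the diagonal. -/
noncomputable def Lset (θ : ℝ) : Set 𝕋 :=
  {p | AccPt p (Filter.principal (Pre θ)) ∧ p.1 ≠ p.2}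

open Classical in
/-- `2⁻¹θ`: the periodic element among `{θ/2, (θ+1)/2}` if `θ` is periodic, and `θ/2`
otherwise. -/
noncomputable def halfTheta (θ : ℝ) : 𝕊 :=
  if IsPer ((θ : ℝ) : 𝕊) then
    (if IsPer ((θ / 2 : ℝ) : 𝕊) then ((θ / 2 : ℝ) : 𝕊) else (((θ + 1) / 2 : ℝ) : 𝕊))
  else ((θ / 2 : ℝ) : 𝕊)

/-- The post-major angle set `P^S_θ = {2⁻¹θ} ∪ {2ⁿθ : n ≥ 0}`. -/
noncomputable def PS (θ : ℝ) : Set 𝕊 :=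
  {halfTheta θ} ∪ {x | ∃ n : ℕ, x = dbl^[n] ((θ : ℝ) : 𝕊)}

/-- `(x, y)` separates `P_θ`: `x ≠ y` and both open arcs of `(ℝ/ℤ) ∖ {x, y}` contain a
point of `P^S_θ`. -/
noncomputable def SepP (θ : ℝ) (p : 𝕋) : Prop :=
  p.1 ≠ p.2 ∧ ∃ u ∈ PS θ, ∃ v ∈ PS θ,
    u ∈ ({p.1, p.2}ᶜ : Set 𝕊) ∧ v ∈ ({p.1, p.2}ᶜ : Set 𝕊) ∧ v ∉ arcAt p.1 p.2 u

/-- `(x, y)` intersects `P_θ`: `x ∈ P^S_θ` or `y ∈ P^S_θ`. -/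
noncomputable def IntP (θ : ℝ) (p : 𝕋) : Prop := p.1 ∈ PS θ ∨ p.2 ∈ PS θ

/-- `X_θ`: the points of `L_θ` which separate or intersect `P_θ`. -/
noncomputable def Xset (θ : ℝ) : Set 𝕋 :=
  {p ∈ Lset θ | SepP θ p ∨ IntP θ p}

/-- `S_θ`: the pre-major leaves which separate or intersect `P_θ`. -/
noncomputable def Sset (θ : ℝ) : Set 𝕋 :=
  {p ∈ Pre θ | SepP θ p ∨ IntP θ p}

/-!
If a pair `(x, y)` neither meets nor separates a finite set `P ⊆ ℝ/ℤ`, then `P` lies in one open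
arc cut out by `x` and `y`, hence in a closed arc `K` missing both of them. Every pair in the open
set `Kᶜ × Kᶜ` then still neither meets nor separates `P`, because the connected set `K` joins all
of `P` inside the complement of its endpoints. So meeting or separating a finite set is a closed
condition on `𝕋`. For rational `θ` the set `P^S_θ` is finite (the doubling orbit of `θ` consists of
`den θ`-torsion points), and `S_θ` lies in this closed set, so its accumulation points do as well.
-/

-- `IntP θ` and `SepP θ` are definitionally `Meets (PS θ)` and `Separates (PS θ)`.
def Meets (P : Set 𝕊) (p : 𝕋) : Prop := p.1 ∈ P ∨ p.2 ∈ P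

def Separates (P : Set 𝕊) (p : 𝕋) : Prop :=
  p.1 ≠ p.2 ∧ ∃ u ∈ P, ∃ v ∈ P,
    u ∈ ({p.1, p.2}ᶜ : Set 𝕊) ∧ v ∈ ({p.1, p.2}ᶜ : Set 𝕊) ∧ v ∉ arcAt p.1 p.2 u

lemma not_meets_and_not_separates_of_isPreconnected {P K : Set 𝕊} {p : 𝕋}
    (hK : IsPreconnected K) (hPK : P ⊆ K) (h₁ : p.1 ∉ K) (h₂ : p.2 ∉ K) :
    ¬ Meets P p ∧ ¬ Separates P p := by
  have hKc : K ⊆ ({p.1, p.2}ᶜ : Set 𝕊) := by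
    rintro z hz (rfl | rfl)
    exacts [h₁ hz, h₂ hz]
  refine ⟨?_, ?_⟩
  · rintro (h | h)
    exacts [h₁ (hPK h), h₂ (hPK h)]
  · rintro ⟨-, u, hu, v, hv, -, -, hvu⟩
    exact hvu (hK.subset_connectedComponentIn (hPK hu) hKc (hPK hv))

lemma coe_ne_coe_of_lt_of_lt_add_one {r s : ℝ} (h₁ : r < s) (h₂ : s < r + 1) :
    (s : 𝕊) ≠ r := fun h =>
  h₁.ne' ((AddCircle.coe_eq_coe_iff_of_mem_Ico ⟨h₁.le, h₂⟩ ⟨le_rfl, by linarith⟩).mp h)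

lemma coe_left_notMem_image_Ioo {a b : ℝ} (hab : b ≤ a + 1) :
    (a : 𝕊) ∉ ((↑) : ℝ → 𝕊) '' Ioo a b := fun ⟨_, hr, h⟩ =>
  coe_ne_coe_of_lt_of_lt_add_one hr.1 (by linarith [hr.2]) h

lemma coe_right_notMem_image_Ioo {a b : ℝ} (hab : b ≤ a + 1) :
    (b : 𝕊) ∉ ((↑) : ℝ → 𝕊) '' Ioo a b := fun ⟨_, hr, h⟩ =>
  coe_ne_coe_of_lt_of_lt_add_one hr.2 (by linarith [hr.1]) h.symm

lemma disjoint_image_Ioo {a b c : ℝ} (hc : c ≤ a + 1) :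
    Disjoint (((↑) : ℝ → 𝕊) '' Ioo a b) ((↑) '' Ioo b c) := by
  rw [Set.disjoint_left]
  rintro _ ⟨r, hr, rfl⟩ ⟨s, hs, h⟩
  exact coe_ne_coe_of_lt_of_lt_add_one (hr.2.trans hs.1) (by linarith [hs.2, hr.1]) h

lemma image_Ioo_eq_compl_singleton (a : ℝ) :
    ((↑) : ℝ → 𝕊) '' Ioo a (a + 1) = {(a : 𝕊)}ᶜ := by
  refine subset_antisymm (fun z hz h => coe_left_notMem_image_Ioo le_rfl (h ▸ hz)) ?_
  intro z hz
  obtain ⟨r, hr, rfl⟩ : z ∈ ((↑) : ℝ → 𝕊) '' Ico a (a + 1) := by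
    rw [AddCircle.coe_image_Ico_eq]; trivial
  exact ⟨r, ⟨hr.1.lt_of_ne (by rintro rfl; exact hz rfl), hr.2⟩, rfl⟩

lemma compl_pair_subset_image_Ioo_union {a b : ℝ} (h₁ : a < b) (h₂ : b < a + 1) :
    ({(a : 𝕊), (b : 𝕊)}ᶜ : Set 𝕊) ⊆ ((↑) : ℝ → 𝕊) '' Ioo a b ∪ (↑) '' Ioo b (a + 1) := by
  intro z hz
  simp only [mem_compl_iff, mem_insert_iff, mem_singleton_iff, not_or] at hz
  obtain ⟨r, hr, rfl⟩ : z ∈ ((↑) : ℝ → 𝕊) '' Ioo a (a + 1) := by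
    rw [image_Ioo_eq_compl_singleton]; exact hz.1
  rcases lt_or_gt_of_ne (show r ≠ b by rintro rfl; exact hz.2 rfl) with h | h
  exacts [Or.inl ⟨r, ⟨hr.1, h⟩, rfl⟩, Or.inr ⟨r, ⟨h, hr.2⟩, rfl⟩]

lemma arcAt_subset_image_Ioo {a b : ℝ} (h₁ : a < b) (h₂ : b < a + 1) {z : 𝕊}
    (hz : z ∈ ((↑) : ℝ → 𝕊) '' Ioo a b) : arcAt a b z ⊆ (↑) '' Ioo a b := by
  have hAB : Disjoint (((↑) : ℝ → 𝕊) '' Ioo a b) ((↑) '' Ioo b (a + 1)) :=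
    disjoint_image_Ioo le_rfl
  have hzc : z ∈ ({(a : 𝕊), (b : 𝕊)}ᶜ : Set 𝕊) := by
    rintro (rfl | rfl)
    exacts [coe_left_notMem_image_Ioo h₂.le hz, coe_right_notMem_image_Ioo h₂.le hz]
  refine (isPreconnected_connectedComponentIn.subset_or_subset
    (QuotientAddGroup.isOpenMap_coe _ isOpen_Ioo) (QuotientAddGroup.isOpenMap_coe _ isOpen_Ioo)
    hAB ((connectedComponentIn_subset _ _).trans
      (compl_pair_subset_image_Ioo_union h₁ h₂))).resolve_right fun h => ?_
  exact hAB.notMem_of_mem_left hz (h (mem_connectedComponentIn hzc))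

lemma exists_image_Ioo_of_not_meets_of_not_separates {P : Set 𝕊} {p : 𝕋}
    (hm : ¬ Meets P p) (hs : ¬ Separates P p) :
    ∃ a b : ℝ, b ≤ a + 1 ∧ P ⊆ (↑) '' Ioo a b ∧
      p.1 ∈ ({(a : 𝕊), (b : 𝕊)} : Set 𝕊) ∧ p.2 ∈ ({(a : 𝕊), (b : 𝕊)} : Set 𝕊) := by
  obtain ⟨x, y⟩ := p
  obtain ⟨ξ, rfl⟩ := QuotientAddGroup.mk_surjective x
  simp only [Meets, not_or] at hm
  by_cases hxy : (ξ : 𝕊) = y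
  · subst hxy
    refine ⟨ξ, ξ + 1, le_rfl, ?_, by simp, by simp⟩
    rw [image_Ioo_eq_compl_singleton]
    exact fun w hw h => hm.1 (h ▸ hw)
  obtain ⟨η, hη, rfl⟩ : y ∈ ((↑) : ℝ → 𝕊) '' Ico ξ (ξ + 1) := by
    rw [AddCircle.coe_image_Ico_eq]; trivial
  have hξη : ξ < η := hη.1.lt_of_ne (by rintro rfl; exact hxy rfl)
  set A := ((↑) : ℝ → 𝕊) '' Ioo ξ η
  set B := ((↑) : ℝ → 𝕊) '' Ioo η (ξ + 1)
  have hPc : P ⊆ ({(ξ : 𝕊), (η : 𝕊)}ᶜ : Set 𝕊) := by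
    rintro w hw (rfl | rfl)
    exacts [hm.1 hw, hm.2 hw]
  have hPAB : P ⊆ A ∪ B := hPc.trans (compl_pair_subset_image_Ioo_union hξη hη.2)
  -- A point of `P` in each of the two arcs would make `(ξ, η)` separate `P`.
  by_cases hA : P ⊆ A
  · exact ⟨ξ, η, hη.2.le, hA, by simp, by simp⟩
  obtain ⟨u, huP, huA⟩ := not_subset.mp hA
  refine ⟨η, ξ + 1, by linarith, fun v hvP => ?_, by simp, by simp⟩
  refine (hPAB hvP).resolve_left fun hvA => hs ⟨hxy, v, hvP, u, huP, hPc hvP, hPc huP, ?_⟩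
  exact fun hu => huA (arcAt_subset_image_Ioo hξη hη.2 hvA hu)

lemma exists_Icc_subset_Ioo_of_finite {P : Set 𝕊} (hP : P.Finite) {a b : ℝ}
    (hPab : P ⊆ (↑) '' Ioo a b) : ∃ c d : ℝ, P ⊆ (↑) '' Icc c d ∧ Icc c d ⊆ Ioo a b := by
  have hlift : ∀ w ∈ P, ∃ r, r ∈ Ioo a b ∧ (r : 𝕊) = w := hPab
  choose! g hg hgw using hlift
  rcases P.eq_empty_or_nonempty with rfl | hne
  · exact ⟨1, 0, empty_subset _, fun r hr => absurd (hr.1.trans hr.2) (by norm_num)⟩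
  obtain ⟨w₀, hw₀, hmin⟩ := Set.exists_min_image P g hP hne
  obtain ⟨w₁, hw₁, hmax⟩ := Set.exists_max_image P g hP hne
  exact ⟨g w₀, g w₁, fun w hw => ⟨g w, ⟨hmin w hw, hmax w hw⟩, hgw w hw⟩,
    Icc_subset_Ioo (hg w₀ hw₀).1 (hg w₁ hw₁).2⟩

lemma exists_image_Icc_of_not_meets_of_not_separates {P : Set 𝕊} (hP : P.Finite) {p : 𝕋}
    (hm : ¬ Meets P p) (hs : ¬ Separates P p) :
    ∃ c d : ℝ, P ⊆ (↑) '' Icc c d ∧ p.1 ∉ ((↑) : ℝ → 𝕊) '' Icc c d ∧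
      p.2 ∉ ((↑) : ℝ → 𝕊) '' Icc c d := by
  obtain ⟨a, b, hab, hPab, h₁, h₂⟩ := exists_image_Ioo_of_not_meets_of_not_separates hm hs
  obtain ⟨c, d, hPcd, hcd⟩ := exists_Icc_subset_Ioo_of_finite hP hPab
  have hout : ∀ z ∈ ({(a : 𝕊), (b : 𝕊)} : Set 𝕊), z ∉ ((↑) : ℝ → 𝕊) '' Icc c d := by
    rintro z (rfl | rfl) hz
    exacts [coe_left_notMem_image_Ioo hab (image_mono hcd hz),
      coe_right_notMem_image_Ioo hab (image_mono hcd hz)]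
  exact ⟨c, d, hPcd, hout _ h₁, hout _ h₂⟩

theorem isClosed_setOf_meets_or_separates {P : Set 𝕊} (hP : P.Finite) :
    IsClosed {p : 𝕋 | Meets P p ∨ Separates P p} := by
  rw [← isOpen_compl_iff, isOpen_iff_mem_nhds]
  intro p hp
  simp only [mem_compl_iff, mem_ofPred_eq, not_or] at hp
  obtain ⟨c, d, hPK, h₁, h₂⟩ := exists_image_Icc_of_not_meets_of_not_separates hP hp.1 hp.2
  have hK : IsClosed (((↑) : ℝ → 𝕊) '' Icc c d) :=
    (isCompact_Icc.image (AddCircle.continuous_mk' 1)).isClosed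
  filter_upwards [prod_mem_nhds (hK.compl_mem_nhds h₁) (hK.compl_mem_nhds h₂)] with q hq
  exact not_or.mpr (not_meets_and_not_separates_of_isPreconnected
    (isPreconnected_Icc.image _ (AddCircle.continuous_mk' 1).continuousOn) hPK hq.1 hq.2)

lemma dbl_iterate (n : ℕ) (x : 𝕊) : dbl^[n] x = 2 ^ n • x := by
  induction n with
  | zero => simp
  | succ n ih => rw [Function.iterate_succ_apply', ih, dbl, ← two_nsmul, smul_smul, pow_succ']

lemma finite_PS_of_rat {θ : ℝ} (hθ : ∃ q : ℚ, (q : ℝ) = θ) : (PS θ).Finite := by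
  obtain ⟨q, rfl⟩ := hθ
  refine (finite_singleton _).union ((AddCircle.finite_torsion (1 : ℝ) q.pos).subset ?_)
  rintro _ ⟨n, rfl⟩
  have hq : q.den • ((q : ℝ) : 𝕊) = 0 := by
    rw [← AddCircle.coe_nsmul, nsmul_eq_mul, mul_comm, ← Rat.cast_natCast, ← Rat.cast_mul,
      Rat.mul_den_eq_num, Rat.cast_intCast, AddCircle.coe_eq_zero_iff]
    exact ⟨q.num, by simp⟩
  rw [mem_ofPred_eq, dbl_iterate, smul_comm, hq, smul_zero]

theorem cluster_Sset_separates_or_intersects_general (θ : ℝ)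
    (hrat : ∃ q : ℚ, (q : ℝ) = θ) :
    ∀ p : 𝕋, AccPt p (Filter.principal (Sset θ)) → IntP θ p ∨ SepP θ p := by
  intro p hp
  have hS : Sset θ ⊆ {p | Meets (PS θ) p ∨ Separates (PS θ) p} := fun _ hq => hq.2.symm
  exact (isClosed_setOf_meets_or_separates (finite_PS_of_rat hrat)).closure_subset_iff.mpr hS
    (mem_closure_iff_clusterPt.mpr hp.clusterPt)

/-- For rational `θ ∈ (ℝ/ℤ) ∖ {0}` (with representative `θ̂ ∈ (0,1)`),
every accumulation point of `S_θ` in the torus intersects or separates `P_θ`. -/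
theorem cluster_Sset_separates_or_intersects (θ : ℝ) (hθ : θ ∈ Ioo (0 : ℝ) 1)
    (hrat : ∃ q : ℚ, (q : ℝ) = θ) :
    ∀ p : 𝕋, AccPt p (Filter.principal (Sset θ)) → IntP θ p ∨ SepP θ p :=
  cluster_Sset_separates_or_intersects_general θ hrat
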